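/- arXiv:2203.00839 — 2 statements merged into one kernel-verified Lean document; each statement's English description precedes it below -/
import Mathlib

section
/- Let g : [0,∞) → ℝ be continuous and nonnegative with first cumulative generator Ḡ(u) = ∫_u^∞ g(v) dv and second cumulative generator 𝒢̄(u) = ∫_u^∞ Ḡ(v) dv both finite on [0,∞), and let H : ℝ → ℝ be twice continuously differentiable and bounded with bounded derivatives. Then for all real a < b: ∫_a^b z² g(z²/2) H(z) dz = a H(a) Ḡ(a²/2) - b H(b) Ḡ(b²/2) + H'(a) 𝒢̄(a²/2) - H'(b) 𝒢̄(b²/2) + ∫_a^b H''(z) 𝒢̄(z²/2) dz + ∫_a^b H(z) Ḡ(z²/2) dz. -/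
/-!
Along the parabola `u = z²/2` the tails satisfy `d/dz [-Ḡ(z²/2)] = z g(z²/2)` and
`d/dz [-𝒢̄(z²/2)] = z Ḡ(z²/2)`. Writing `z² g(z²/2) H(z) = (z H(z)) · (z g(z²/2))` and integrating
by parts produces the boundary terms in `Ḡ` and `∫ (H + z H') Ḡ(z²/2)`; the piece
`H'(z) · (z Ḡ(z²/2))` of the latter is integrated by parts once more in the same way.
-/

open MeasureTheory Set Real intervalIntegral

theorem hasDerivWithinAt_intervalIntegral_Ici {f : ℝ → ℝ} {c u : ℝ}
    (hc : ContinuousOn f (Ici c)) (hu : c ≤ u) :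
    HasDerivWithinAt (fun t => ∫ x in c..t, f x) (f u) (Ici c) u := by
  have hint : IntervalIntegrable f volume c u :=
    (hc.mono Icc_subset_Ici_self).intervalIntegrable_of_Icc hu
  have hmeas : AEStronglyMeasurable f (volume.restrict (Ici c)) :=
    hc.aestronglyMeasurable measurableSet_Ici
  obtain rfl | hcu := hu.eq_or_lt
  · exact integral_hasDerivWithinAt_right hint
      ⟨Ici c, Filter.mem_of_superset self_mem_nhdsWithin Ioi_subset_Ici_self, hmeas⟩
      ((hc.continuousWithinAt self_mem_Ici).mono Ioi_subset_Ici_self)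
  · exact (integral_hasDerivAt_right hint ⟨Ici c, Ici_mem_nhds hcu, hmeas⟩
      (hc.continuousAt (Ici_mem_nhds hcu))).hasDerivWithinAt

theorem hasDerivWithinAt_integral_Ioi {f : ℝ → ℝ} {c u : ℝ}
    (hc : ContinuousOn f (Ici c)) (hi : IntegrableOn f (Ioi c)) (hu : c ≤ u) :
    HasDerivWithinAt (fun t => ∫ x in Ioi t, f x) (-f u) (Ici c) u := by
  have htail : ∀ t ∈ Ici c, ∫ x in Ioi t, f x = (∫ x in Ioi c, f x) - ∫ x in c..t, f x :=
    fun t ht => by rw [← integral_Ioi_sub_Ioi hi ht, sub_sub_cancel]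
  exact ((hasDerivWithinAt_intervalIntegral_Ici hc hu).const_sub _).congr htail (htail u hu)

theorem continuousOn_integral_Ioi {f : ℝ → ℝ} {c : ℝ}
    (hc : ContinuousOn f (Ici c)) (hi : IntegrableOn f (Ioi c)) :
    ContinuousOn (fun t => ∫ x in Ioi t, f x) (Ici c) :=
  fun _ hu => (hasDerivWithinAt_integral_Ioi hc hi hu).continuousWithinAt

theorem hasDerivAt_integral_Ioi_sq_div_two {f : ℝ → ℝ}
    (hc : ContinuousOn f (Ici 0)) (hi : IntegrableOn f (Ioi 0)) (z : ℝ) :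
    HasDerivAt (fun z => ∫ x in Ioi (z ^ 2 / 2), f x) (-f (z ^ 2 / 2) * z) z := by
  have hq : HasDerivAt (fun z : ℝ => z ^ 2 / 2) z z := by
    simpa using (hasDerivAt_pow 2 z).div_const 2
  exact (hasDerivWithinAt_integral_Ioi hc hi (by positivity)).comp_hasDerivAt z hq
    (Filter.Eventually.of_forall fun x => show 0 ≤ x ^ 2 / 2 by positivity)

theorem integral_mul_mul_comp_sq_div_two {f u u' : ℝ → ℝ} {a b : ℝ}
    (hc : ContinuousOn f (Ici 0)) (hi : IntegrableOn f (Ioi 0))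
    (hu : ∀ x ∈ uIcc a b, HasDerivAt u (u' x) x) (hu' : IntervalIntegrable u' volume a b) :
    ∫ z in a..b, u z * (z * f (z ^ 2 / 2)) =
      u a * (∫ x in Ioi (a ^ 2 / 2), f x) - u b * (∫ x in Ioi (b ^ 2 / 2), f x)
        + ∫ z in a..b, u' z * ∫ x in Ioi (z ^ 2 / 2), f x := by
  have hv : ∀ z ∈ uIcc a b,
      HasDerivAt (fun z => -∫ x in Ioi (z ^ 2 / 2), f x) (z * f (z ^ 2 / 2)) z := fun z _ =>
    (hasDerivAt_integral_Ioi_sq_div_two hc hi z).neg.congr_deriv (by ring)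
  have hv' : Continuous fun z : ℝ => z * f (z ^ 2 / 2) :=
    continuous_id.mul <| hc.comp_continuous (by fun_prop) fun z => show 0 ≤ z ^ 2 / 2 by positivity
  rw [integral_mul_deriv_eq_deriv_mul hu hv hu' (hv'.intervalIntegrable a b)]
  simp only [mul_neg, intervalIntegral.integral_neg]
  ring

theorem second_moment_integration_by_parts_general
    (g : ℝ → ℝ) (hg_cont : ContinuousOn g (Ici 0))
    (hg_int : IntegrableOn g (Ici 0))
    (hG_int : IntegrableOn (fun v => ∫ w in Ioi v, g w) (Ici 0))
    (H : ℝ → ℝ) (hH : ContDiff ℝ 2 H)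
    (a b : ℝ) :
    (∫ z in a..b, z ^ 2 * g (z ^ 2 / 2) * H z) =
      a * H a * (∫ v in Ioi (a ^ 2 / 2), g v)
        - b * H b * (∫ v in Ioi (b ^ 2 / 2), g v)
        + deriv H a * (∫ v in Ioi (a ^ 2 / 2), ∫ w in Ioi v, g w)
        - deriv H b * (∫ v in Ioi (b ^ 2 / 2), ∫ w in Ioi v, g w)
        + (∫ z in a..b,
            deriv (deriv H) z * (∫ v in Ioi (z ^ 2 / 2), ∫ w in Ioi v, g w))
        + ∫ z in a..b, H z * (∫ v in Ioi (z ^ 2 / 2), g v) := by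
  have hg_int' := hg_int.mono_set Ioi_subset_Ici_self
  have hG_int' := hG_int.mono_set Ioi_subset_Ici_self
  have hG_cont := continuousOn_integral_Ioi hg_cont hg_int'
  have hH' : ContDiff ℝ 1 (deriv H) := (contDiff_succ_iff_deriv (n := 1).mp hH).2.2
  have hHd : Differentiable ℝ H := hH.differentiable two_ne_zero
  have hGq : Continuous fun z : ℝ => ∫ v in Ioi (z ^ 2 / 2), g v :=
    hG_cont.comp_continuous (by fun_prop) fun z => show 0 ≤ z ^ 2 / 2 by positivity
  calc (∫ z in a..b, z ^ 2 * g (z ^ 2 / 2) * H z)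
      = ∫ z in a..b, z * H z * (z * g (z ^ 2 / 2)) := by
        congr 1; ext z; ring
    _ = a * H a * (∫ v in Ioi (a ^ 2 / 2), g v) - b * H b * (∫ v in Ioi (b ^ 2 / 2), g v)
          + ∫ z in a..b, (H z + z * deriv H z) * ∫ v in Ioi (z ^ 2 / 2), g v :=
        integral_mul_mul_comp_sq_div_two hg_cont hg_int'
          (fun z _ => ((hasDerivAt_id z).mul (hHd z).hasDerivAt).congr_deriv (by simp))
          ((hHd.continuous.add (continuous_id.mul hH'.continuous)).intervalIntegrable a b)
    _ = a * H a * (∫ v in Ioi (a ^ 2 / 2), g v) - b * H b * (∫ v in Ioi (b ^ 2 / 2), g v)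
          + (∫ z in a..b, H z * ∫ v in Ioi (z ^ 2 / 2), g v)
          + ∫ z in a..b, deriv H z * (z * ∫ v in Ioi (z ^ 2 / 2), g v) := by
        rw [add_assoc, ← intervalIntegral.integral_add]
        · congr 2; ext z; ring
        all_goals exact Continuous.intervalIntegrable (by fun_prop) a b
    _ = _ := by
        rw [integral_mul_mul_comp_sq_div_two hG_cont hG_int'
          (fun z _ => (hH'.differentiable one_ne_zero z).hasDerivAt)
          ((hH'.continuous_deriv le_rfl).intervalIntegrable a b)]
        ring

/-- Integration-by-parts identity for the second doubly truncated moment: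
if `g` is continuous and nonnegative on `[0,∞)` with finite first and second
cumulative generators `Ḡ u = ∫_u^∞ g v dv` and `𝒢̄ u = ∫_u^∞ Ḡ v dv`, and `H`
is `C²` and bounded with bounded derivatives, then for `a < b`
`∫_a^b z² g(z²/2) H(z) dz = a H(a) Ḡ(a²/2) - b H(b) Ḡ(b²/2)
  + H'(a) 𝒢̄(a²/2) - H'(b) 𝒢̄(b²/2) + ∫_a^b H''(z) 𝒢̄(z²/2) dz
  + ∫_a^b H(z) Ḡ(z²/2) dz`. -/
theorem second_moment_integration_by_parts
    (g : ℝ → ℝ) (hg_cont : ContinuousOn g (Ici 0))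
    (hg_nonneg : ∀ v, 0 ≤ v → 0 ≤ g v)
    (hg_int : IntegrableOn g (Ici 0))
    (hG_int : IntegrableOn (fun v => ∫ w in Ioi v, g w) (Ici 0))
    (H : ℝ → ℝ) (hH : ContDiff ℝ 2 H)
    (hHbd : ∃ C, ∀ z, |H z| ≤ C)
    (hH'bd : ∃ C, ∀ z, |deriv H z| ≤ C)
    (hH''bd : ∃ C, ∀ z, |deriv (deriv H) z| ≤ C)
    (a b : ℝ) (hab : a < b) :
    (∫ z in a..b, z ^ 2 * g (z ^ 2 / 2) * H z) =
      a * H a * (∫ v in Ioi (a ^ 2 / 2), g v)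
        - b * H b * (∫ v in Ioi (b ^ 2 / 2), g v)
        + deriv H a * (∫ v in Ioi (a ^ 2 / 2), ∫ w in Ioi v, g w)
        - deriv H b * (∫ v in Ioi (b ^ 2 / 2), ∫ w in Ioi v, g w)
        + (∫ z in a..b,
            deriv (deriv H) z * (∫ v in Ioi (z ^ 2 / 2), ∫ w in Ioi v, g w))
        + ∫ z in a..b, H z * (∫ v in Ioi (z ^ 2 / 2), g v) :=
  second_moment_integration_by_parts_general g hg_cont hg_int hG_int H hH a b
end

section
/- Let f : ℝⁿ → [0,∞) be a probability density function that is spherically symmetric (f(-z) = f(z) for all z), and let H : ℝⁿ → [0,1] satisfy H(-z) = 1 - H(z) for all z. Then z ↦ 2 f(z) H(z) is also a probability density function, i.e. ∫_{ℝⁿ} 2 f(z) H(z) dz = 1. -/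
open MeasureTheory Set

/-- If `f : ℝⁿ → [0,∞)` is an even probability density function and
`H : ℝⁿ → [0,1]` satisfies the skewing symmetry `H (-z) = 1 - H z`, then
`z ↦ 2 f z H z` is again a probability density: `∫ 2 f(z) H(z) dz = 1`. -/
theorem skewed_density_integrates_to_one (n : ℕ)
    (f : (Fin n → ℝ) → ℝ) (hf_meas : Measurable f)
    (hf_nonneg : ∀ z, 0 ≤ f z) (hf_even : ∀ z, f (-z) = f z)
    (hf_int : Integrable f) (hf_one : (∫ z, f z) = 1)
    (H : (Fin n → ℝ) → ℝ) (hH_meas : Measurable H)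
    (hH01 : ∀ z, H z ∈ Set.Icc (0 : ℝ) 1)
    (hH_skew : ∀ z, H (-z) = 1 - H z) :
    (∫ z, 2 * f z * H z) = 1 := by
  have hint : Integrable (fun z => f z * H z) := by
    refine hf_int.mono ((hf_meas.mul hH_meas).aestronglyMeasurable)
      (Filter.Eventually.of_forall fun z => ?_)
    have h := hH01 z
    rw [Real.norm_eq_abs, Real.norm_eq_abs, abs_mul,
      abs_of_nonneg (hf_nonneg z), abs_of_nonneg h.1]
    nlinarith [hf_nonneg z, h.1, h.2]
  have key : (∫ z, f z * H z) = ∫ z, f z * (1 - H z) := by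
    calc (∫ z, f z * H z) = ∫ z, f (-z) * H (-z) := by
          rw [integral_neg_eq_self (fun z => f z * H z) volume]
      _ = ∫ z, f z * (1 - H z) := by
          simp_rw [hf_even, hH_skew]
  have h2 : (∫ z, f z * (1 - H z)) = 1 - ∫ z, f z * H z := by
    have : (fun z => f z * (1 - H z)) = fun z => f z - f z * H z := by
      ext z; ring
    rw [this, integral_sub hf_int hint, hf_one]
  have : (∫ z, f z * H z) = 1 / 2 := by rw [key] at *; linarith [h2 ▸ key]
  calc (∫ z, 2 * f z * H z) = 2 * ∫ z, f z * H z := by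
        simp_rw [mul_assoc]; exact integral_const_mul 2 _
    _ = 1 := by rw [this]; ring
end
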